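/- arXiv:1003.1657 — 4 statements merged into one kernel-verified Lean document; each statement's English description precedes it below -/
import Mathlib

section
/- For every fixed α ∈ (0,2), h > 0, and u ∈ ℝ, the map Δ ↦ φ_{α,Δ}(u) is continuous on [0,h]; consequently the family of probability measures F_{α,Δ} with characteristic function φ_{α,Δ} depends continuously on Δ ∈ [0,h] in the weak topology. -/
/-!
Take the truncation level `τ = e^{h/2 - Δ}`, which is admissible for every `Δ`. Then the indicator
`1_{e^{hm-Δ} < τ}` becomes `1_{m ≤ 0}`, independent of `Δ`, and `C_{α,Δ;τ}` becomes an explicit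
continuous function of `Δ`. For `Δ ∈ [0,h]` the `m`-th term of the series is bounded by
`K e^{-c|m|}` with `c = min(α, 2-α) h > 0`: the second-order bound `|e^{iθ} - 1 - iθ| ≤ 2θ²` gives
`e^{(2-α)(hm-Δ)}` for `m ≤ 0`, and the trivial bound gives `e^{-α(hm-Δ)}` for `m > 0`. The
Weierstrass M-test yields continuity in `Δ`. Weak continuity of the laws follows from Lévy's
continuity theorem, applied along sequences.
-/

open MeasureTheory Filter

/-- `[b]_h := max {a ∈ hℤ : a ≤ b}`, the lattice entire part of `b`. -/
noncomputable def latFloor (h b : ℝ) : ℝ := h * (⌊b / h⌋ : ℝ)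

/-- The shift constant `C_{α,Δ;τ}` of the limiting semi-stable law. -/
noncomputable def Cconst (α h Δ τ : ℝ) : ℝ :=
  if α = 1 then h⁻¹ * latFloor h (Real.log τ + Δ)
  else Real.exp (-(α - 1) * (latFloor h (Δ + Real.log τ) - Δ)) / (1 - Real.exp ((α - 1) * h))

/-- The exponent in the Lévy–Khintchine representation of `φ_{α,Δ}`. -/
noncomputable def phiExp (α h Δ τ : ℝ) (u : ℝ) : ℂ :=
  Complex.I * (Cconst α h Δ τ : ℂ) * (u : ℂ) +
    ∑' m : ℤ, (Complex.exp (Complex.I * (u : ℂ) * (Real.exp (h * (m : ℝ) - Δ) : ℂ)) - 1 -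
      Complex.I * (u : ℂ) * (Real.exp (h * (m : ℝ) - Δ) : ℂ) *
        (if Real.exp (h * (m : ℝ) - Δ) < τ then 1 else 0)) *
      (Real.exp (-α * (h * (m : ℝ) - Δ)) : ℂ)

/-- The characteristic function `φ_{α,Δ}` of the limiting semi-stable law. -/
noncomputable def phiFn (α h Δ τ : ℝ) (u : ℝ) : ℂ := Complex.exp (phiExp α h Δ τ u)

open Complex in
theorem Complex.norm_exp_I_mul_ofReal_sub_one_sub_le (θ : ℝ) :
    ‖exp (I * θ) - 1 - I * θ‖ ≤ 2 * θ ^ 2 := by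
  have hnorm : ‖I * (θ : ℂ)‖ = |θ| := by simp
  rcases le_or_gt |θ| 1 with hθ | hθ
  · calc ‖exp (I * θ) - 1 - I * θ‖ ≤ ‖I * (θ : ℂ)‖ ^ 2 :=
          norm_exp_sub_one_sub_id_le (hnorm ▸ hθ)
      _ ≤ 2 * θ ^ 2 := by rw [hnorm, sq_abs]; nlinarith [sq_nonneg θ]
  · calc ‖exp (I * θ) - 1 - I * θ‖ ≤ ‖exp (I * θ) - 1‖ + ‖I * (θ : ℂ)‖ := norm_sub_le _ _
      _ ≤ |θ| + |θ| := by
          rw [hnorm]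
          gcongr
          simpa using Real.norm_exp_I_mul_ofReal_sub_one_le (x := θ)
      _ ≤ 2 * θ ^ 2 := by nlinarith [sq_abs θ]

theorem Real.summable_exp_neg_mul_abs_int {c : ℝ} (hc : 0 < c) :
    Summable fun m : ℤ ↦ Real.exp (-(c * |(m : ℝ)|)) := by
  have hnat : Summable fun n : ℕ ↦ Real.exp (n * -c) :=
    Real.summable_exp_nat_mul_iff.2 (neg_lt_zero.2 hc)
  refine summable_int_iff_summable_nat_and_neg.2 ⟨?_, ?_⟩ <;>
    refine hnat.congr fun n ↦ ?_ <;> simp [mul_comm]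

namespace MeasureTheory

variable {E : Type*} [NormedAddCommGroup E] [InnerProductSpace ℝ E] [FiniteDimensional ℝ E]
  [MeasurableSpace E] [BorelSpace E]

theorem ProbabilityMeasure.continuous_of_continuous_charFun {X : Type*} [TopologicalSpace X]
    [SequentialSpace X] {P : X → ProbabilityMeasure E}
    (h : ∀ t, Continuous fun x ↦ charFun (P x : Measure E) t) : Continuous P :=
  continuous_iff_seqContinuous.2 fun _ _ hx ↦
    ProbabilityMeasure.tendsto_of_tendsto_charFun fun t ↦ ((h t).tendsto _).comp hx

theorem continuousOn_integral_of_continuousOn_charFun {X : Type*} [TopologicalSpace X]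
    [FirstCountableTopology X] {s : Set X} {μ : X → Measure E}
    (hμ : ∀ x ∈ s, IsProbabilityMeasure (μ x))
    (h : ∀ t, ContinuousOn (fun x ↦ charFun (μ x) t) s) (f : BoundedContinuousFunction E ℝ) :
    ContinuousOn (fun x ↦ ∫ y, f y ∂μ x) s := by
  let P : s → ProbabilityMeasure E := fun x ↦ ⟨μ x, hμ x x.2⟩
  have hP : Continuous P := ProbabilityMeasure.continuous_of_continuous_charFun fun t ↦
    continuousOn_iff_continuous_domRestrict.1 (h t)
  exact continuousOn_iff_continuous_domRestrict.2
    ((ProbabilityMeasure.continuous_integral_boundedContinuousFunction f).comp hP)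

theorem charFun_eq_integral_exp_I_mul (μ : Measure ℝ) (t : ℝ) :
    charFun μ t = ∫ x, Complex.exp (Complex.I * t * x) ∂μ := by
  simp only [charFun_apply_real, mul_comm _ Complex.I, mul_assoc]

end MeasureTheory

section SemiStable

variable (α h u : ℝ)

noncomputable def jumpTerm (m : ℤ) (Δ : ℝ) : ℂ :=
  (Complex.exp (Complex.I * u * Real.exp (h * m - Δ)) - 1 -
    Complex.I * u * Real.exp (h * m - Δ) * (if m ≤ 0 then 1 else 0)) *
    Real.exp (-α * (h * m - Δ))

noncomputable def driftConst (Δ : ℝ) : ℝ :=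
  if α = 1 then 0 else Real.exp ((α - 1) * Δ) / (1 - Real.exp ((α - 1) * h))

/-- `φ_{α,Δ}(u)` written with the admissible truncation level `τ = e^{h/2 - Δ}`. -/
noncomputable def phiCanonical (Δ : ℝ) : ℂ :=
  Complex.exp (Complex.I * driftConst α h Δ * u + ∑' m : ℤ, jumpTerm α h u m Δ)

variable {α h u}

theorem continuous_jumpTerm (m : ℤ) : Continuous (jumpTerm α h u m) := by
  unfold jumpTerm; fun_prop

@[fun_prop]
theorem continuous_driftConst : Continuous (driftConst α h) := by
  unfold driftConst; split_ifs <;> fun_prop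

theorem norm_jumpTerm_le_of_nonpos {m : ℤ} (hm : m ≤ 0) (Δ : ℝ) :
    ‖jumpTerm α h u m Δ‖ ≤ 2 * u ^ 2 * Real.exp ((2 - α) * (h * m - Δ)) := by
  have hsplit : Real.exp ((2 - α) * (h * m - Δ)) =
      Real.exp (h * m - Δ) ^ 2 * Real.exp (-α * (h * m - Δ)) := by
    rw [sq, ← Real.exp_add, ← Real.exp_add]; ring_nf
  have hθ : Complex.I * u * Real.exp (h * m - Δ) = Complex.I * ↑(u * Real.exp (h * m - Δ)) := by
    push_cast; ring
  rw [jumpTerm, if_pos hm, mul_one, norm_mul, Complex.norm_real, Real.norm_of_nonneg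
    (Real.exp_nonneg _), hθ, hsplit]
  calc _ ≤ 2 * (u * Real.exp (h * m - Δ)) ^ 2 * Real.exp (-α * (h * m - Δ)) := by
        gcongr; exact Complex.norm_exp_I_mul_ofReal_sub_one_sub_le _
    _ = _ := by ring

theorem norm_jumpTerm_le_of_pos {m : ℤ} (hm : 0 < m) (Δ : ℝ) :
    ‖jumpTerm α h u m Δ‖ ≤ 2 * Real.exp (-α * (h * m - Δ)) := by
  have hθ : Complex.I * u * Real.exp (h * m - Δ) = Complex.I * ↑(u * Real.exp (h * m - Δ)) := by
    push_cast; ring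
  rw [jumpTerm, if_neg hm.not_ge, mul_zero, sub_zero, norm_mul, Complex.norm_real,
    Real.norm_of_nonneg (Real.exp_nonneg _), hθ]
  gcongr
  calc _ ≤ ‖Complex.exp (Complex.I * ↑(u * Real.exp (h * m - Δ)))‖ + ‖(1 : ℂ)‖ := norm_sub_le _ _
    _ = 2 := by rw [Complex.norm_exp_I_mul_ofReal]; norm_num

theorem norm_jumpTerm_le (hα : α ∈ Set.Ioo (0 : ℝ) 2) (m : ℤ) {Δ : ℝ} (hΔ : Δ ∈ Set.Icc 0 h) :
    ‖jumpTerm α h u m Δ‖ ≤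
      (2 * u ^ 2 + 2 * Real.exp (α * h)) * Real.exp (-(min α (2 - α) * h * |(m : ℝ)|)) := by
  obtain ⟨hα₀, hα₂⟩ := hα
  obtain ⟨hΔ₀, hΔh⟩ := hΔ
  rcases le_or_gt m 0 with hm | hm
  · have hm' : (m : ℝ) ≤ 0 := by exact_mod_cast hm
    have hexp : (2 - α) * (h * m - Δ) ≤ -(min α (2 - α) * h * |(m : ℝ)|) := by
      rw [abs_of_nonpos hm']
      nlinarith [min_le_right α (2 - α), mul_nonpos_of_nonneg_of_nonpos (hΔ₀.trans hΔh) hm']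
    calc _ ≤ 2 * u ^ 2 * Real.exp ((2 - α) * (h * m - Δ)) := norm_jumpTerm_le_of_nonpos hm Δ
      _ ≤ 2 * u ^ 2 * Real.exp (-(min α (2 - α) * h * |(m : ℝ)|)) := by gcongr
      _ ≤ _ := by gcongr; linarith [Real.exp_pos (α * h)]
  · have hm' : (0 : ℝ) < m := by exact_mod_cast hm
    have hexp : -α * (h * m - Δ) ≤ α * h + -(min α (2 - α) * h * |(m : ℝ)|) := by
      rw [abs_of_pos hm']
      nlinarith [min_le_left α (2 - α), mul_nonneg (hΔ₀.trans hΔh) hm'.le]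
    calc _ ≤ 2 * Real.exp (-α * (h * m - Δ)) := norm_jumpTerm_le_of_pos hm Δ
      _ ≤ 2 * (Real.exp (α * h) * Real.exp (-(min α (2 - α) * h * |(m : ℝ)|))) := by
          rw [← Real.exp_add]; gcongr
      _ ≤ _ := by rw [← mul_assoc]; gcongr; nlinarith [sq_nonneg u]

theorem continuousOn_phiCanonical (hα : α ∈ Set.Ioo (0 : ℝ) 2) (hh : 0 < h) :
    ContinuousOn (phiCanonical α h u) (Set.Icc 0 h) := by
  have hc : 0 < min α (2 - α) * h := mul_pos (lt_min hα.1 (by linarith [hα.2])) hh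
  have hsum : ContinuousOn (fun Δ ↦ ∑' m : ℤ, jumpTerm α h u m Δ) (Set.Icc 0 h) :=
    continuousOn_tsum (fun m ↦ (continuous_jumpTerm m).continuousOn)
      ((Real.summable_exp_neg_mul_abs_int hc).mul_left _) fun m _ hΔ ↦ norm_jumpTerm_le hα m hΔ
  unfold phiCanonical
  exact Complex.continuous_exp.comp_continuousOn
    ((by fun_prop : Continuous fun Δ ↦ Complex.I * driftConst α h Δ * u).continuousOn.add hsum)

end SemiStable

section Truncation

variable {α h : ℝ}

theorem half_lt_mul_intCast (hh : 0 < h) {m : ℤ} (hm : 0 < m) : h / 2 < h * m := by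
  have : (1 : ℝ) ≤ m := by exact_mod_cast hm
  nlinarith

theorem mul_intCast_lt_half_iff (hh : 0 < h) (m : ℤ) : h * m < h / 2 ↔ m ≤ 0 := by
  refine ⟨fun hlt ↦ not_lt.1 fun hm ↦ (half_lt_mul_intCast hh hm).not_gt hlt, fun hm ↦ ?_⟩
  have : (m : ℝ) ≤ 0 := by exact_mod_cast hm
  nlinarith

theorem exp_half_sub_ne (hh : 0 < h) (Δ : ℝ) (m : ℤ) :
    Real.exp (h / 2 - Δ) ≠ Real.exp (h * m - Δ) := by
  rw [Ne, Real.exp_eq_exp, sub_left_inj]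
  rcases le_or_gt m 0 with hm | hm
  · exact ((mul_intCast_lt_half_iff hh m).2 hm).ne'
  · exact (half_lt_mul_intCast hh hm).ne

theorem latFloor_half (hh : 0 < h) : latFloor h (h / 2) = 0 := by
  rw [latFloor, div_div_cancel_left' hh.ne', Int.floor_eq_zero_iff.2 (by constructor <;> linarith)]
  simp

theorem Cconst_exp_half_sub (hh : 0 < h) (Δ : ℝ) :
    Cconst α h Δ (Real.exp (h / 2 - Δ)) = driftConst α h Δ := by
  rw [Cconst, driftConst, Real.log_exp, sub_add_cancel, add_sub_cancel, latFloor_half hh]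
  split_ifs
  · simp
  · ring_nf

theorem phiFn_exp_half_sub (hh : 0 < h) (Δ u : ℝ) :
    phiFn α h Δ (Real.exp (h / 2 - Δ)) u = phiCanonical α h u Δ := by
  rw [phiFn, phiExp, phiCanonical, Cconst_exp_half_sub hh]
  congr 2
  refine tsum_congr fun m ↦ ?_
  simp only [jumpTerm, Real.exp_lt_exp, sub_lt_sub_iff_right, mul_intCast_lt_half_iff hh]

end Truncation

theorem phiFn_continuous_in_Delta
    (α h : ℝ) (hα : α ∈ Set.Ioo (0 : ℝ) 2) (hh : 0 < h) (u : ℝ)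
    -- `F` is the well-defined map `Δ ↦ φ_{α,Δ}(u)` (the value does not depend on the
    -- admissible choice of `τ`)
    (F : ℝ → ℂ)
    (hF : ∀ Δ ∈ Set.Icc (0 : ℝ) h, ∀ τ : ℝ, 0 < τ →
      (∀ m : ℤ, τ ≠ Real.exp (h * (m : ℝ) - Δ)) → F Δ = phiFn α h Δ τ u) :
    ContinuousOn F (Set.Icc 0 h) ∧
    -- consequently, any family of probability measures `F_{α,Δ}` with characteristic
    -- functions `φ_{α,Δ}` depends continuously on `Δ ∈ [0,h]` in the weak topology
    (∀ μ : ℝ → Measure ℝ, (∀ Δ ∈ Set.Icc (0 : ℝ) h, IsProbabilityMeasure (μ Δ)) →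
      (∀ Δ ∈ Set.Icc (0 : ℝ) h, ∀ τ : ℝ, 0 < τ →
        (∀ m : ℤ, τ ≠ Real.exp (h * (m : ℝ) - Δ)) →
        ∀ v : ℝ, (∫ x, Complex.exp (Complex.I * (v : ℂ) * (x : ℂ)) ∂(μ Δ)) = phiFn α h Δ τ v) →
      ∀ f : BoundedContinuousFunction ℝ ℝ,
        ContinuousOn (fun Δ => ∫ x, f x ∂(μ Δ)) (Set.Icc 0 h)) := by
  refine ⟨(continuousOn_phiCanonical (u := u) hα hh).congr fun Δ hΔ ↦ ?_, fun μ hμ hchar f ↦ ?_⟩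
  · rw [hF Δ hΔ _ (Real.exp_pos _) (exp_half_sub_ne hh Δ), phiFn_exp_half_sub hh]
  · refine continuousOn_integral_of_continuousOn_charFun hμ (fun t ↦ ?_) f
    refine (continuousOn_phiCanonical (u := t) hα hh).congr fun Δ hΔ ↦ ?_
    rw [charFun_eq_integral_exp_I_mul,
      hchar Δ hΔ _ (Real.exp_pos _) (exp_half_sub_ne hh Δ), phiFn_exp_half_sub hh]
end

section
/- For every α ∈ (0,2), h > 0 and Δ ∈ [0,h], the function φ_{α,Δ} is semi-stable with index α and span e^h: there exists c ∈ ℝ such that for all u ∈ ℝ, (φ_{α,Δ}(u))^{e^{αh}} = e^{icu} · φ_{α,Δ}(e^{h} u). -/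
open MeasureTheory Filter

/-! The Lévy measure `∑ₘ e^{-α(hm-Δ)} δ_{e^{hm-Δ}}` is carried to `e^{-αh}` times itself by
`x ↦ e^h x`, so after the reindexing `m ↦ m + 1` each summand of `e^{αh} log φ(u)` becomes the
corresponding summand of `log φ(e^h u)`. Only the compensator `i u x 1_{x < τ}` is not scale
invariant: its cut-off moves by one lattice point, which produces a single term linear in `u`
that is absorbed, together with the drift, into `icu`. The series converge for `0 < α < 2`
because `|e^{ix} - 1 - ix| ≤ 2x²` below the cut-off and `|e^{ix} - 1| ≤ 2` above it. -/

open Real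

theorem summable_int_of_exp_decay {E : Type*} [NormedAddCommGroup E] [CompleteSpace E]
    {f : ℤ → E} {a b A B : ℝ} (ha : 0 < a) (hb : 0 < b)
    (hbot : ∀ᶠ m in atBot, ‖f m‖ ≤ A * exp (a * m))
    (htop : ∀ᶠ m in atTop, ‖f m‖ ≤ B * exp (-(b * m))) : Summable f := by
  refine .of_nat_of_neg
    (.of_norm_bounded_eventually_nat (g := fun n : ℕ => B * exp (-b) ^ n) ?_ ?_)
    (.of_norm_bounded_eventually_nat (g := fun n : ℕ => A * exp (-a) ^ n) ?_ ?_)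
  · exact (summable_geometric_of_lt_one (exp_nonneg _) (exp_lt_one_iff.2 (by linarith))).mul_left B
  · filter_upwards [tendsto_natCast_atTop_atTop.eventually htop] with n hn
    simpa [← exp_nat_mul, mul_comm] using hn
  · exact (summable_geometric_of_lt_one (exp_nonneg _) (exp_lt_one_iff.2 (by linarith))).mul_left A
  · filter_upwards [(tendsto_neg_atTop_atBot.comp tendsto_natCast_atTop_atTop).eventually hbot]
      with n hn
    simpa [← exp_nat_mul, mul_comm] using hn

theorem norm_cexp_I_mul_sub_one_sub_le (x : ℝ) :
    ‖Complex.exp (Complex.I * x) - 1 - Complex.I * x‖ ≤ 2 * x ^ 2 := by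
  rcases le_or_gt |x| 1 with hx | hx
  · calc ‖Complex.exp (Complex.I * x) - 1 - Complex.I * x‖ ≤ ‖Complex.I * x‖ ^ 2 :=
          Complex.norm_exp_sub_one_sub_id_le (by simpa using hx)
      _ = x ^ 2 := by simp
      _ ≤ 2 * x ^ 2 := by linarith [sq_nonneg x]
  · calc ‖Complex.exp (Complex.I * x) - 1 - Complex.I * x‖
        ≤ ‖Complex.exp (Complex.I * x) - 1‖ + ‖Complex.I * x‖ := norm_sub_le _ _
      _ ≤ |x| + |x| := by
        gcongr
        · exact norm_exp_I_mul_ofReal_sub_one_le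
        · simp
      _ ≤ 2 * x ^ 2 := by nlinarith [sq_abs x]

theorem norm_cexp_I_mul_sub_one_le_two (x : ℝ) : ‖Complex.exp (Complex.I * x) - 1‖ ≤ 2 :=
  (norm_sub_le _ _).trans (by simp [Complex.norm_exp_I_mul_ofReal]; norm_num)

noncomputable def cutoffIndex (h Δ τ : ℝ) : ℤ := ⌈(log τ + Δ) / h⌉

noncomputable def phiTerm (α h Δ τ u : ℝ) (m : ℤ) : ℂ :=
  (Complex.exp (Complex.I * (u : ℂ) * (Real.exp (h * (m : ℝ) - Δ) : ℂ)) - 1 -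
      Complex.I * (u : ℂ) * (Real.exp (h * (m : ℝ) - Δ) : ℂ) *
        (if Real.exp (h * (m : ℝ) - Δ) < τ then 1 else 0)) *
      (Real.exp (-α * (h * (m : ℝ) - Δ)) : ℂ)

section

variable {α h Δ τ : ℝ}

theorem phiExp_eq_tsum_phiTerm (u : ℝ) :
    phiExp α h Δ τ u =
      Complex.I * (Cconst α h Δ τ : ℂ) * (u : ℂ) + ∑' m : ℤ, phiTerm α h Δ τ u m := rfl

theorem exp_lt_iff_lt_cutoffIndex (hh : 0 < h) (hτ : 0 < τ) (m : ℤ) :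
    exp (h * m - Δ) < τ ↔ m < cutoffIndex h Δ τ := by
  rw [cutoffIndex, ← lt_log_iff_exp_lt hτ, Int.lt_ceil, lt_div_iff₀ hh]
  constructor <;> intro <;> linarith

theorem norm_phiTerm (u : ℝ) (m : ℤ) :
    ‖phiTerm α h Δ τ u m‖ = ‖Complex.exp (Complex.I * ↑(u * exp (h * m - Δ))) - 1 -
      Complex.I * ↑(u * exp (h * m - Δ)) * (if exp (h * m - Δ) < τ then 1 else 0)‖ *
        exp (-α * (h * m - Δ)) := by
  rw [phiTerm, norm_mul, Complex.norm_real, norm_of_nonneg (exp_pos _).le]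
  push_cast
  ring_nf

theorem summable_phiTerm (hα : α ∈ Set.Ioo 0 2) (hh : 0 < h) (hτ : 0 < τ) (u : ℝ) :
    Summable (phiTerm α h Δ τ u) := by
  obtain ⟨hα0, hα2⟩ := hα
  refine summable_int_of_exp_decay (a := (2 - α) * h) (b := α * h)
    (A := 2 * u ^ 2 * exp (-((2 - α) * Δ))) (B := 2 * exp (α * Δ))
    (by nlinarith) (by positivity) ?_ ?_
  · filter_upwards [eventually_lt_atBot (cutoffIndex h Δ τ)] with m hm
    rw [norm_phiTerm, if_pos ((exp_lt_iff_lt_cutoffIndex hh hτ m).2 hm), mul_one]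
    calc _ ≤ 2 * (u * exp (h * m - Δ)) ^ 2 * exp (-α * (h * m - Δ)) := by
          gcongr; exact norm_cexp_I_mul_sub_one_sub_le _
      _ = _ := by
        have hexp : exp (h * m - Δ) ^ 2 * exp (-α * (h * m - Δ)) =
            exp (-((2 - α) * Δ)) * exp ((2 - α) * h * m) := by
          rw [← exp_nat_mul, ← exp_add, ← exp_add]; ring_nf
        linear_combination 2 * u ^ 2 * hexp
  · filter_upwards [eventually_ge_atTop (cutoffIndex h Δ τ)] with m hm
    rw [norm_phiTerm, if_neg ((exp_lt_iff_lt_cutoffIndex hh hτ m).not.2 hm.not_gt), mul_zero,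
      sub_zero]
    calc _ ≤ 2 * exp (-α * (h * m - Δ)) := by
          gcongr; exact norm_cexp_I_mul_sub_one_le_two _
      _ = _ := by rw [mul_assoc, ← exp_add]; ring_nf

/-- `x · e^{-α log x}` for the last atom `x = e^{h(N-1)-Δ}` below the cut-off, where
`N = cutoffIndex h Δ τ`: the compensator loses exactly this atom under `x ↦ e^h x`. -/
noncomputable def cutoffJump (α h Δ τ : ℝ) : ℝ :=
  exp ((1 - α) * (h * ↑(cutoffIndex h Δ τ - 1) - Δ))

theorem exp_mul_phiTerm_add_one (hh : 0 < h) (hτ : 0 < τ) (u : ℝ) (m : ℤ) :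
    (exp (α * h) : ℂ) * phiTerm α h Δ τ u (m + 1) =
      phiTerm α h Δ τ (exp h * u) m +
        if m = cutoffIndex h Δ τ - 1 then Complex.I * ↑(exp h * u) * ↑(cutoffJump α h Δ τ)
        else 0 := by
  have hx : exp (h * ↑(m + 1) - Δ) = exp h * exp (h * m - Δ) := by
    rw [← exp_add]; push_cast; ring_nf
  have hw : (exp (α * h) : ℂ) * ↑(exp (-α * (h * ↑(m + 1) - Δ))) =
      ↑(exp (-α * (h * m - Δ))) := by
    rw [← Complex.ofReal_mul, ← exp_add]; push_cast; ring_nf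
  simp only [phiTerm, exp_lt_iff_lt_cutoffIndex hh hτ]
  simp only [hx, Complex.ofReal_mul]
  set z := Complex.I * ↑u * (↑(exp h) * ↑(exp (h * m - Δ)))
  rw [show Complex.I * (↑(exp h) * ↑u) * ↑(exp (h * m - Δ)) = z by ring]
  obtain hlt | rfl | hge : m + 1 < cutoffIndex h Δ τ ∨ m = cutoffIndex h Δ τ - 1 ∨
      cutoffIndex h Δ τ ≤ m := by omega
  · rw [if_pos hlt, if_pos (by omega), if_neg (by omega)]
    linear_combination (Complex.exp z - 1 - z) * hw
  · have hjump : cutoffJump α h Δ τ = exp (h * ↑(cutoffIndex h Δ τ - 1) - Δ) *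
        exp (-α * (h * ↑(cutoffIndex h Δ τ - 1) - Δ)) := by
      rw [cutoffJump, ← exp_add]; ring_nf
    rw [if_neg (by omega), if_pos (by omega), if_pos rfl, hjump, Complex.ofReal_mul]
    linear_combination (Complex.exp z - 1) * hw
  · rw [if_neg (by omega), if_neg (by omega), if_neg (by omega)]
    linear_combination (Complex.exp z - 1) * hw

theorem exp_mul_tsum_phiTerm (hα : α ∈ Set.Ioo 0 2) (hh : 0 < h) (hτ : 0 < τ) (u : ℝ) :
    (exp (α * h) : ℂ) * ∑' m, phiTerm α h Δ τ u m =
      ∑' m, phiTerm α h Δ τ (exp h * u) m + Complex.I * ↑(exp h * u) * ↑(cutoffJump α h Δ τ) := by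
  rw [← tsum_mul_left, ← (Equiv.addRight (1 : ℤ)).tsum_eq]
  simp only [Equiv.coe_addRight, exp_mul_phiTerm_add_one hh hτ]
  rw [(summable_phiTerm hα hh hτ _).tsum_add (summable_of_ne_finset_zero
    (s := {cutoffIndex h Δ τ - 1}) fun m hm => if_neg (by simpa using hm)), tsum_ite_eq]

end

theorem phiFn_semistable_general
    (α h Δ τ : ℝ) (hα : α ∈ Set.Ioo (0 : ℝ) 2) (hh : 0 < h)
    (hτ : 0 < τ) :
    -- `(φ_{α,Δ}(u))^{e^{αh}} = e^{icu} φ_{α,Δ}(e^h u)`, the power taken with the branch of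
    -- the logarithm given by the explicit Lévy–Khintchine exponent
    ∃ c : ℝ, ∀ u : ℝ,
      Complex.exp ((Real.exp (α * h) : ℂ) * phiExp α h Δ τ u) =
        Complex.exp (Complex.I * (c : ℂ) * (u : ℂ)) * phiFn α h Δ τ (Real.exp h * u) := by
  refine ⟨(exp (α * h) - exp h) * Cconst α h Δ τ + exp h * cutoffJump α h Δ τ, fun u => ?_⟩
  rw [phiFn, ← Complex.exp_add, phiExp_eq_tsum_phiTerm, phiExp_eq_tsum_phiTerm, mul_add,
    exp_mul_tsum_phiTerm hα hh hτ]
  congr 1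
  simp only [Complex.ofReal_add, Complex.ofReal_mul, Complex.ofReal_sub]
  ring

theorem phiFn_semistable
    (α h Δ τ : ℝ) (hα : α ∈ Set.Ioo (0 : ℝ) 2) (hh : 0 < h) (hΔ : Δ ∈ Set.Icc 0 h)
    (hτ : 0 < τ) (hτlat : ∀ m : ℤ, τ ≠ Real.exp (h * (m : ℝ) - Δ)) :
    -- `(φ_{α,Δ}(u))^{e^{αh}} = e^{icu} φ_{α,Δ}(e^h u)`, the power taken with the branch of
    -- the logarithm given by the explicit Lévy–Khintchine exponent
    ∃ c : ℝ, ∀ u : ℝ,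
      Complex.exp ((Real.exp (α * h) : ℂ) * phiExp α h Δ τ u) =
        Complex.exp (Complex.I * (c : ℂ) * (u : ℂ)) * phiFn α h Δ τ (Real.exp h * u) :=
  phiFn_semistable_general α h Δ τ hα hh hτ
end

section
/- For h > 0, α ∈ (0,2), Δ ∈ ℝ, τ > 0 and every u ∈ ℝ, the series Σ_{m∈ℤ} (e^{i u e^{hm−Δ}} − 1 − i u e^{hm−Δ} 1_{e^{hm−Δ}<τ}) e^{−α(hm−Δ)} converges absolutely. -/
/-!
Write `x = e^s` with `s = hm − Δ`. For `x ≥ τ` the bracket is bounded by `2`, so the summand is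
`O(e^{−αs})`, geometrically small as `m → ∞` since `α > 0`. For `x < τ` the bracket is
`e^{iux} − 1 − iux = O((ux)²)`, so the summand is `O(e^{(2−α)s})`, geometrically small as
`m → −∞` since `α < 2`; `τ > 0` guarantees that `x < τ` for all sufficiently negative `m`.
-/

open MeasureTheory Filter

namespace Complex

theorem norm_exp_I_mul_ofReal_sub_one_le_two (t : ℝ) : ‖exp (I * t) - 1‖ ≤ 2 := by
  calc ‖exp (I * t) - 1‖ ≤ ‖exp (I * t)‖ + ‖(1 : ℂ)‖ := norm_sub_le _ _
    _ = 2 := by rw [norm_exp_I_mul_ofReal, norm_one]; norm_num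

theorem norm_exp_I_mul_ofReal_sub_one_sub_le_s6 (t : ℝ) : ‖exp (I * t) - 1 - I * t‖ ≤ 2 * t ^ 2 := by
  have hIt : ‖I * (t : ℂ)‖ = |t| := by simp
  rcases le_or_gt |t| 1 with ht | ht
  · calc ‖exp (I * t) - 1 - I * t‖ ≤ ‖I * (t : ℂ)‖ ^ 2 :=
          norm_exp_sub_one_sub_id_le (hIt ▸ ht)
      _ ≤ 2 * t ^ 2 := by rw [hIt, sq_abs]; nlinarith [sq_nonneg t]
  · calc ‖exp (I * t) - 1 - I * t‖ ≤ ‖exp (I * t) - 1‖ + ‖I * (t : ℂ)‖ := norm_sub_le _ _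
      _ ≤ |t| + |t| := by
          rw [hIt]; gcongr; simpa using Real.norm_exp_I_mul_ofReal_sub_one_le (x := t)
      _ ≤ 2 * t ^ 2 := by nlinarith [sq_abs t]

end Complex

theorem Real.summable_exp_mul_add {c a : ℝ} (b : ℝ) (hca : c * a < 0) :
    Summable fun n : ℕ => Real.exp (c * (a * n + b)) := by
  have hgeo := (Real.summable_exp_nat_mul_iff.mpr hca).mul_left (Real.exp (c * b))
  refine hgeo.congr fun n => ?_
  rw [← Real.exp_add]; ring_nf

/-- The `m`-th summand of the series, as a function of `s = hm − Δ`. -/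
noncomputable def levySummand (α u τ s : ℝ) : ℂ :=
  (Complex.exp (Complex.I * (u : ℂ) * (Real.exp s : ℂ)) - 1 -
    Complex.I * (u : ℂ) * (Real.exp s : ℂ) * (if Real.exp s < τ then 1 else 0)) *
    (Real.exp (-α * s) : ℂ)

section levySummand

variable {α τ s : ℝ} (u : ℝ)

theorem norm_levySummand :
    ‖levySummand α u τ s‖ =
      ‖Complex.exp (Complex.I * (u : ℂ) * (Real.exp s : ℂ)) - 1 -
        Complex.I * (u : ℂ) * (Real.exp s : ℂ) * (if Real.exp s < τ then 1 else 0)‖ *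
        Real.exp (-α * s) := by
  rw [levySummand, norm_mul, Complex.norm_real, Real.norm_of_nonneg (Real.exp_pos _).le]

theorem norm_levySummand_le_of_lt (hs : Real.exp s < τ) :
    ‖levySummand α u τ s‖ ≤ 2 * u ^ 2 * Real.exp ((2 - α) * s) := by
  have hbracket := Complex.norm_exp_I_mul_ofReal_sub_one_sub_le_s6 (u * Real.exp s)
  rw [Complex.ofReal_mul, ← mul_assoc] at hbracket
  rw [norm_levySummand, if_pos hs, mul_one]
  calc _ ≤ 2 * (u * Real.exp s) ^ 2 * Real.exp (-α * s) := by gcongr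
    _ = 2 * u ^ 2 * Real.exp ((2 - α) * s) := by
      rw [mul_pow, ← Real.exp_nat_mul, mul_assoc, mul_assoc, ← Real.exp_add]; ring_nf

theorem norm_levySummand_le_of_le (hs : τ ≤ Real.exp s) :
    ‖levySummand α u τ s‖ ≤ 2 * Real.exp (-α * s) := by
  have hbracket := Complex.norm_exp_I_mul_ofReal_sub_one_le_two (u * Real.exp s)
  rw [Complex.ofReal_mul, ← mul_assoc] at hbracket
  rw [norm_levySummand, if_neg hs.not_gt, mul_zero, sub_zero]
  gcongr

end levySummand

section summable

variable {α a : ℝ} (u τ b : ℝ)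

theorem summable_norm_levySummand_of_pos (hα : 0 < α) (ha : 0 < a) :
    Summable fun n : ℕ => ‖levySummand α u τ (a * n + b)‖ := by
  have hlarge : ∀ᶠ n : ℕ in atTop, τ ≤ Real.exp (a * n + b) :=
    (Real.tendsto_exp_atTop.comp <| tendsto_atTop_add_const_right _ b <|
      tendsto_natCast_atTop_atTop.const_mul_atTop ha).eventually_ge_atTop τ
  refine ((Real.summable_exp_mul_add b (by nlinarith : -α * a < 0)).mul_left 2)
    |>.of_norm_bounded_eventually_nat ?_
  filter_upwards [hlarge] with n hn
  simpa using norm_levySummand_le_of_le u hn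

theorem summable_norm_levySummand_of_neg (hα : α < 2) (hτ : 0 < τ) (ha : a < 0) :
    Summable fun n : ℕ => ‖levySummand α u τ (a * n + b)‖ := by
  have hsmall : ∀ᶠ n : ℕ in atTop, Real.exp (a * n + b) < τ :=
    (Real.tendsto_exp_atBot.comp <| tendsto_atBot_add_const_right _ b <|
      tendsto_natCast_atTop_atTop.const_mul_atTop_of_neg ha).eventually (gt_mem_nhds hτ)
  refine ((Real.summable_exp_mul_add b (by nlinarith : (2 - α) * a < 0)).mul_left (2 * u ^ 2))
    |>.of_norm_bounded_eventually_nat ?_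
  filter_upwards [hsmall] with n hn
  simpa using norm_levySummand_le_of_lt u hn

end summable

theorem levy_series_summable
    (α h Δ τ u : ℝ) (hα : α ∈ Set.Ioo (0 : ℝ) 2) (hh : 0 < h) (hτ : 0 < τ) :
    Summable (fun m : ℤ =>
      ‖(Complex.exp (Complex.I * (u : ℂ) * (Real.exp (h * (m : ℝ) - Δ) : ℂ)) - 1 -
        Complex.I * (u : ℂ) * (Real.exp (h * (m : ℝ) - Δ) : ℂ) *
          (if Real.exp (h * (m : ℝ) - Δ) < τ then 1 else 0)) *
        (Real.exp (-α * (h * (m : ℝ) - Δ)) : ℂ)‖) := by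
  change Summable fun m : ℤ => ‖levySummand α u τ (h * m - Δ)‖
  refine Summable.of_nat_of_neg ?_ ?_
  · simpa [sub_eq_add_neg] using summable_norm_levySummand_of_pos u τ (-Δ) hα.1 hh
  · simpa [sub_eq_add_neg] using
      summable_norm_levySummand_of_neg u τ (-Δ) hα.2 hτ (neg_lt_zero.mpr hh)
end

section
/- Under the standing assumptions, if {x_n} is a real sequence with x_n → x, then n·I((b_n + x_n)/n) = log( N_n h / √(2π ψ''(α) n) ) + αx + o(1) as n → ∞. -/
open MeasureTheory Filter

/-!
The cumulant generating function `ψ` is smooth and strictly convex: its second derivative is the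
variance of `V` under an exponentially tilted law, which is equivalent to `P`, so it is positive
for non-degenerate `V`. Hence at a slope `β = ψ'(t)` the supremum defining `I` is attained at `t`,
`I(ψ'(t)) = tψ'(t) - ψ(t)`, and between the slopes `ψ'(t)` and `ψ'(u)` the function `I` grows at
rate between `t` and `u`. Write `b_n/n = ψ'(T_n)` and `(b_n + x_n)/n = ψ'(U_n)`. The choice of `b_n`
gives `I(b_n/n) → λ = I(ψ'(α))`, so `T_n → α` by strict monotonicity, then `U_n → α` as well, and
`n I((b_n + x_n)/n) - n I(b_n/n)` is squeezed between `T_n x_n` and `U_n x_n`, both tending to `αx`.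
-/

open Real ProbabilityTheory Set Topology

namespace ProbabilityTheory

variable {Ω : Type*} [MeasurableSpace Ω] {μ : Measure Ω} {X : Ω → ℝ}

lemma iteratedDeriv_two_cgf_pos [NeZero μ] {t : ℝ} (ht : t ∈ interior (integrableExpSet X μ))
    (hX : ¬ ∃ c : ℝ, ∀ᵐ ω ∂μ, X ω = c) : 0 < iteratedDeriv 2 (cgf X μ) t := by
  rw [← variance_tilted_mul ht]
  refine (variance_nonneg _ _).lt_of_ne' fun hvar => hX ?_
  have hint : Integrable (fun ω ↦ exp (t * X ω)) μ := interior_subset (s := integrableExpSet X μ) ht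
  have := isProbabilityMeasure_tilted hint
  exact ⟨_, absolutelyContinuous_tilted hint
    (ae_eq_integral_of_variance_eq_zero (memLp_tilted_mul ht 2) hvar)⟩

lemma interior_integrableExpSet_eq_univ (h : ∀ t, Integrable (fun ω ↦ exp (t * X ω)) μ) :
    interior (integrableExpSet X μ) = univ := by
  rw [show integrableExpSet X μ = univ from eq_univ_of_forall h, interior_univ]

lemma differentiable_cgf (h : ∀ t, Integrable (fun ω ↦ exp (t * X ω)) μ) :
    Differentiable ℝ (cgf X μ) := fun t =>
  (analyticAt_cgf (by simp [interior_integrableExpSet_eq_univ h])).differentiableAt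

lemma continuous_deriv_cgf (h : ∀ t, Integrable (fun ω ↦ exp (t * X ω)) μ) :
    Continuous (deriv (cgf X μ)) := by
  rw [← continuousOn_univ, ← interior_integrableExpSet_eq_univ h]
  exact analyticOnNhd_cgf.deriv.continuousOn

lemma deriv_deriv_cgf_pos [NeZero μ] (h : ∀ t, Integrable (fun ω ↦ exp (t * X ω)) μ)
    (hX : ¬ ∃ c : ℝ, ∀ᵐ ω ∂μ, X ω = c) (t : ℝ) : 0 < deriv (deriv (cgf X μ)) t := by
  simpa only [iteratedDeriv_succ, iteratedDeriv_zero] using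
    iteratedDeriv_two_cgf_pos (by simp [interior_integrableExpSet_eq_univ h]) hX

lemma strictMono_deriv_cgf [NeZero μ] (h : ∀ t, Integrable (fun ω ↦ exp (t * X ω)) μ)
    (hX : ¬ ∃ c : ℝ, ∀ᵐ ω ∂μ, X ω = c) : StrictMono (deriv (cgf X μ)) :=
  strictMono_of_deriv_pos (deriv_deriv_cgf_pos h hX)

end ProbabilityTheory

lemma StrictMonoOn.tendsto_of_tendsto_comp {α β ι : Type*} [LinearOrder α] [TopologicalSpace α]
    [OrderTopology α] [LinearOrder β] [TopologicalSpace β] [OrderTopology β] {l : Filter ι}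
    {g : α → β} {s : Set α} (hs : s.OrdConnected) (hg : StrictMonoOn g s) {u : ι → α} {a : α}
    (ha : a ∈ s) (hu : ∀ᶠ n in l, u n ∈ s) (hgu : Tendsto (fun n => g (u n)) l (𝓝 (g a))) :
    Tendsto u l (𝓝 a) := by
  rw [tendsto_order]
  constructor
  · intro b hb
    by_cases hbs : b ∈ s
    · filter_upwards [hu, hgu.eventually (eventually_gt_nhds (hg hbs ha hb))] with n hns hgn
      exact (hg.lt_iff_lt hbs hns).1 hgn
    · filter_upwards [hu] with n hns
      by_contra! hle
      exact hbs (hs.out hns ha ⟨hle, hb.le⟩)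
  · intro b hb
    by_cases hbs : b ∈ s
    · filter_upwards [hu, hgu.eventually (eventually_lt_nhds (hg ha hbs hb))] with n hns hgn
      exact (hg.lt_iff_lt hns hbs).1 hgn
    · filter_upwards [hu] with n hns
      by_contra! hle
      exact hbs (hs.out ha hns ⟨hb.le, hle⟩)

namespace StrictMono

variable {ι : Type*} {l : Filter ι} {f : ℝ → ℝ} {y : ι → ℝ} {a : ℝ}

lemma eventually_apply_invFun (hf : StrictMono f) (hc : Continuous f)
    (hy : Tendsto y l (𝓝 (f a))) : ∀ᶠ n in l, f (Function.invFun f (y n)) = y n := by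
  have hrange : Ioo (f (a - 1)) (f (a + 1)) ⊆ range f :=
    (intermediate_value_Ioo (by linarith : a - 1 ≤ a + 1) hc.continuousOn).trans
      (image_subset_range _ _)
  filter_upwards [hy (Ioo_mem_nhds (hf (sub_one_lt a)) (hf (lt_add_one a)))] with n hn
  exact Function.invFun_eq (hrange hn)

lemma tendsto_invFun (hf : StrictMono f) (hc : Continuous f) (hy : Tendsto y l (𝓝 (f a))) :
    Tendsto (fun n => Function.invFun f (y n)) l (𝓝 a) :=
  (hf.strictMonoOn univ).tendsto_of_tendsto_comp ordConnected_univ (mem_univ a)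
    (Eventually.of_forall fun _ => mem_univ _)
    (hy.congr' ((hf.eventually_apply_invFun hc hy).mono fun _ hn => hn.symm))

end StrictMono

lemma tendsto_log_mul_div_sqrt_div {N : ℕ → ℝ} {a c lam : ℝ} (hN : ∀ n, N n ≠ 0) (ha : a ≠ 0)
    (hc : 0 < c) (hlam : Tendsto (fun n : ℕ => log (N n) / n) atTop (𝓝 lam)) :
    Tendsto (fun n : ℕ => log (N n * a / √(c * n)) / n) atTop (𝓝 lam) := by
  have hlog : Tendsto (fun n : ℕ => log n / n) atTop (𝓝 0) :=
    isLittleO_log_id_atTop.tendsto_div_nhds_zero.comp tendsto_natCast_atTop_atTop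
  have hconst (r : ℝ) : Tendsto (fun n : ℕ => r / n) atTop (𝓝 0) :=
    tendsto_const_nhds.div_atTop tendsto_natCast_atTop_atTop
  have := (hlam.add (hconst (log a))).sub (((hconst (log c)).add hlog).div_const 2)
  rw [add_zero, zero_add, zero_div, sub_zero] at this
  refine this.congr' ?_
  filter_upwards [eventually_gt_atTop 0] with n hn
  have hn : (0 : ℝ) < n := Nat.cast_pos.2 hn
  rw [log_div (mul_ne_zero (hN n) ha) (sqrt_pos.2 (by positivity)).ne', log_mul (hN n) ha,
    log_sqrt (by positivity), log_mul hc.ne' hn.ne']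
  ring

namespace ConvexOn

variable {f : ℝ → ℝ}

lemma add_deriv_mul_sub_le (hf : ConvexOn ℝ univ f) {x : ℝ} (hx : DifferentiableAt ℝ f x)
    (y : ℝ) : f x + deriv f x * (y - x) ≤ f y := by
  rcases lt_trichotomy x y with hxy | rfl | hyx
  · have := hf.deriv_le_slope (mem_univ x) (mem_univ y) hxy hx
    rw [slope_def_field, le_div_iff₀ (sub_pos.2 hxy)] at this
    linarith
  · simp
  · have := hf.slope_le_deriv (mem_univ y) (mem_univ x) hyx hx
    rw [slope_def_field, div_le_iff₀ (sub_pos.2 hyx)] at this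
    linarith

lemma iSup_deriv_mul_sub_eq (hf : ConvexOn ℝ univ f) {x : ℝ} (hx : DifferentiableAt ℝ f x) :
    ⨆ y, (deriv f x * y - f y) = x * deriv f x - f x :=
  ciSup_eq_of_forall_le_of_forall_lt_exists_gt
    (fun y => by linarith [hf.add_deriv_mul_sub_le hx y]) fun w hw => ⟨x, by linarith⟩

lemma mul_deriv_sub_le (hf : ConvexOn ℝ univ f) {u : ℝ} (hu : DifferentiableAt ℝ f u) (t : ℝ) :
    t * (deriv f u - deriv f t) ≤ (u * deriv f u - f u) - (t * deriv f t - f t) := by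
  linarith [hf.add_deriv_mul_sub_le hu t]

lemma sub_le_mul_deriv_sub (hf : ConvexOn ℝ univ f) {t : ℝ} (ht : DifferentiableAt ℝ f t)
    (u : ℝ) : (u * deriv f u - f u) - (t * deriv f t - f t) ≤ u * (deriv f u - deriv f t) := by
  linarith [hf.add_deriv_mul_sub_le ht u]

lemma strictMonoOn_mul_deriv_sub (hf : ConvexOn ℝ univ f) (hd : Differentiable ℝ f)
    (hmono : StrictMono (deriv f)) : StrictMonoOn (fun t => t * deriv f t - f t) (Ioi 0) :=
  fun t ht u _ htu => by
    have := hf.mul_deriv_sub_le (hd u) t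
    nlinarith [hmono htu, mem_Ioi.1 ht]

lemma tendsto_mul_sub_of_deriv_eq_add (hf : ConvexOn ℝ univ f) (hd : Differentiable ℝ f)
    {T U xs : ℕ → ℝ} {a x : ℝ} (hT : Tendsto T atTop (𝓝 a))
    (hU : Tendsto U atTop (𝓝 a)) (hxs : Tendsto xs atTop (𝓝 x))
    (hTU : ∀ᶠ n in atTop, deriv f (U n) = deriv f (T n) + xs n / n) :
    Tendsto (fun n : ℕ => n * ((U n * deriv f (U n) - f (U n)) - (T n * deriv f (T n) - f (T n))))
      atTop (𝓝 (a * x)) := by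
  refine tendsto_of_tendsto_of_tendsto_of_le_of_le' (hT.mul hxs) (hU.mul hxs) ?_ ?_ <;>
    filter_upwards [hTU, eventually_gt_atTop 0] with n hn hn_pos <;>
    have hxs_eq : xs n = n * (deriv f (U n) - deriv f (T n)) := by
      rw [hn]; field_simp; ring
  · calc T n * xs n = n * (T n * (deriv f (U n) - deriv f (T n))) := by rw [hxs_eq]; ring
      _ ≤ _ := mul_le_mul_of_nonneg_left (hf.mul_deriv_sub_le (hd _) _) n.cast_nonneg
  · calc _ ≤ n * (U n * (deriv f (U n) - deriv f (T n))) :=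
          mul_le_mul_of_nonneg_left (hf.sub_le_mul_deriv_sub (hd _) _) n.cast_nonneg
      _ = U n * xs n := by rw [hxs_eq]; ring

lemma tendsto_natCast_mul_iSup_sub (hf : ConvexOn ℝ univ f) (hd : Differentiable ℝ f)
    (hmono : StrictMono (deriv f)) (hc : Continuous (deriv f))
    {T xs : ℕ → ℝ} {a x : ℝ} (hT : Tendsto T atTop (𝓝 a)) (hxs : Tendsto xs atTop (𝓝 x)) :
    Tendsto (fun n : ℕ => n * ((⨆ t, (deriv f (T n) + xs n / n) * t - f t) -
      ⨆ t, deriv f (T n) * t - f t)) atTop (𝓝 (a * x)) := by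
  have hβ : Tendsto (fun n : ℕ => deriv f (T n) + xs n / n) atTop (𝓝 (deriv f a)) := by
    simpa using ((hc.tendsto a).comp hT).add (hxs.div_atTop tendsto_natCast_atTop_atTop)
  have hU := hmono.eventually_apply_invFun hc hβ
  refine (hf.tendsto_mul_sub_of_deriv_eq_add hd hT (hmono.tendsto_invFun hc hβ) hxs hU).congr' ?_
  filter_upwards [hU] with n hn
  conv_rhs => rw [← hn]
  rw [hf.iSup_deriv_mul_sub_eq (hd _), hf.iSup_deriv_mul_sub_eq (hd _)]

end ConvexOn

theorem asymptotics_of_nI_general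
    {Ω : Type*} [MeasurableSpace Ω] (P : Measure Ω) [IsProbabilityMeasure P]
    -- `V` : non-degenerate random variable satisfying the Cramér condition
    (V : Ω → ℝ)
    (hcramer : ∀ t : ℝ, Integrable (fun ω => Real.exp (t * V ω)) P)
    (hnondeg : ¬ ∃ c : ℝ, ∀ᵐ ω ∂P, V ω = c)
    -- `V` is lattice with maximal span `h > 0`
    (h : ℝ) (hh : 0 < h)
    -- `ψ` : log-Laplace transform, `I` : its Legendre–Fenchel transform
    (ψ : ℝ → ℝ) (hψ : ∀ t, ψ t = Real.log (∫ ω, Real.exp (t * V ω) ∂P))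
    (I : ℝ → ℝ) (hI : ∀ β, I β = ⨆ t : ℝ, (β * t - ψ t))
    -- `N_n → ∞` with `λ = lim (1/n) log N_n ∈ (0, λ₂)`
    (N : ℕ → ℕ) (hN : ∀ n, 0 < N n)
    (lam : ℝ) (hlam : Tendsto (fun n : ℕ => Real.log (N n) / n) atTop (nhds lam))
    -- `α` the unique solution of `αψ'(α) - ψ(α) = λ`
    (α : ℝ) (hα : α ∈ Set.Ioo (0 : ℝ) 2) (hαlam : α * deriv ψ α - ψ α = lam)
    -- `b_n = n I⁻¹((1/n) log (N_n h / √(2π ψ''(α) n)))`, `I⁻¹` valued in `(EV, lim_{t→∞} ψ'(t))`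
    (b : ℕ → ℝ)
    (hbmem : ∀ n : ℕ, 0 < n → ∃ t : ℝ, 0 < t ∧ deriv ψ t = b n / n)
    (hbval : ∀ n : ℕ, 0 < n → I (b n / n) =
      Real.log ((N n : ℝ) * h / Real.sqrt (2 * Real.pi * deriv (deriv ψ) α * n)) / n)
    (x : ℝ) (xs : ℕ → ℝ) (hxs : Tendsto xs atTop (nhds x)) :
    -- `n I((b_n + x_n)/n) = log(N_n h / √(2π ψ''(α) n)) + αx + o(1)`
    Tendsto (fun n : ℕ => (n : ℝ) * I ((b n + xs n) / n) -
        (Real.log ((N n : ℝ) * h / Real.sqrt (2 * Real.pi * deriv (deriv ψ) α * n)) + α * x))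
      atTop (nhds 0) := by
  obtain rfl : ψ = cgf V P := funext hψ
  have hd := differentiable_cgf hcramer
  have hmono := strictMono_deriv_cgf hcramer hnondeg
  have hconv := hmono.monotone.convexOn_univ_of_deriv hd
  choose! T hTpos hTb using hbmem
  have hTlim : Tendsto T atTop (𝓝 α) := by
    refine (hconv.strictMonoOn_mul_deriv_sub hd hmono).tendsto_of_tendsto_comp ordConnected_Ioi
      hα.1 ((eventually_gt_atTop 0).mono hTpos) ?_
    rw [hαlam]
    refine (tendsto_log_mul_div_sqrt_div (fun n => by exact_mod_cast (hN n).ne') hh.ne'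
      (mul_pos two_pi_pos (deriv_deriv_cgf_pos hcramer hnondeg α)) hlam).congr' ?_
    filter_upwards [eventually_gt_atTop 0] with n hn
    rw [← hbval n hn, hI, ← hTb n hn, hconv.iSup_deriv_mul_sub_eq (hd _)]
  simp_rw [← sub_sub]
  rw [tendsto_sub_nhds_zero_iff]
  refine (hconv.tendsto_natCast_mul_iSup_sub hd hmono (continuous_deriv_cgf hcramer) hTlim
    hxs).congr' ?_
  filter_upwards [eventually_gt_atTop 0] with n hn
  rw [hTb n hn, ← add_div, ← hI, ← hI, hbval n hn]
  field_simp

theorem asymptotics_of_nI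
    {Ω : Type*} [MeasurableSpace Ω] (P : Measure Ω) [IsProbabilityMeasure P]
    -- `V` : non-degenerate random variable satisfying the Cramér condition
    (V : Ω → ℝ) (hVmeas : Measurable V)
    (hcramer : ∀ t : ℝ, Integrable (fun ω => Real.exp (t * V ω)) P)
    (hnondeg : ¬ ∃ c : ℝ, ∀ᵐ ω ∂P, V ω = c)
    -- `V` is lattice with maximal span `h > 0`
    (h : ℝ) (hh : 0 < h)
    (hlat : ∀ᵐ ω ∂P, ∃ m : ℤ, V ω = h * (m : ℝ))
    (hmax : ∀ h' : ℝ, 0 < h' → (∀ᵐ ω ∂P, ∃ m : ℤ, V ω = h' * (m : ℝ)) → h' ≤ h)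
    -- `ψ` : log-Laplace transform, `I` : its Legendre–Fenchel transform
    (ψ : ℝ → ℝ) (hψ : ∀ t, ψ t = Real.log (∫ ω, Real.exp (t * V ω) ∂P))
    (I : ℝ → ℝ) (hI : ∀ β, I β = ⨆ t : ℝ, (β * t - ψ t))
    -- `N_n → ∞` with `λ = lim (1/n) log N_n ∈ (0, λ₂)`
    (N : ℕ → ℕ) (hN : ∀ n, 0 < N n) (hNinf : Tendsto N atTop atTop)
    (lam : ℝ) (hlam : Tendsto (fun n : ℕ => Real.log (N n) / n) atTop (nhds lam))
    (hlam0 : 0 < lam) (hlam2 : lam < 2 * deriv ψ 2 - ψ 2)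
    -- `α` the unique solution of `αψ'(α) - ψ(α) = λ`
    (α : ℝ) (hα : α ∈ Set.Ioo (0 : ℝ) 2) (hαlam : α * deriv ψ α - ψ α = lam)
    -- `b_n = n I⁻¹((1/n) log (N_n h / √(2π ψ''(α) n)))`, `I⁻¹` valued in `(EV, lim_{t→∞} ψ'(t))`
    (b : ℕ → ℝ)
    (hbmem : ∀ n : ℕ, 0 < n → ∃ t : ℝ, 0 < t ∧ deriv ψ t = b n / n)
    (hbval : ∀ n : ℕ, 0 < n → I (b n / n) =
      Real.log ((N n : ℝ) * h / Real.sqrt (2 * Real.pi * deriv (deriv ψ) α * n)) / n)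
    (x : ℝ) (xs : ℕ → ℝ) (hxs : Tendsto xs atTop (nhds x)) :
    -- `n I((b_n + x_n)/n) = log(N_n h / √(2π ψ''(α) n)) + αx + o(1)`
    Tendsto (fun n : ℕ => (n : ℝ) * I ((b n + xs n) / n) -
        (Real.log ((N n : ℝ) * h / Real.sqrt (2 * Real.pi * deriv (deriv ψ) α * n)) + α * x))
      atTop (nhds 0) :=
  asymptotics_of_nI_general P V hcramer hnondeg h hh ψ hψ I hI N hN lam hlam α hα hαlam b hbmem
    hbval x xs hxs
end
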